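/- arXiv:2402.16121 — 2 statements merged into one kernel-verified Lean document; each statement's English description precedes it below -/
import Mathlib

section
/- Let X₁, X₂, W be real-valued random variables on a probability space such that X₁ has the Gaussian distribution N(μ_x, σ_x²), X₂ has the Gaussian distribution N(μ_x, t²σ_x²), and W has the Gaussian distribution N(μ_w, σ_w²), where σ_x > 0, σ_w > 0, μ_x ≠ 0, and t > 1. Assume X₁ is independent of W and X₂ is independent of W. Then Var(X₁·W) < Var(X₂·W) < t²·Var(X₁·W); in particular the ratio of the standard deviation of X₂·W to that of X₁·W is strictly between 1 and t, i.e. strictly smaller than the ratio t of the input standard deviations. -/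
/-!
For independent `X` and `W`, `Var(XW) = Var X · E[W²] + (E X)² · Var W`. With `W` fixed and
`X ~ N(μₓ, v)` this is an affine function `α v + β` of the input variance, with slope
`α = E[W²] > 0` and intercept `β = μₓ² σ_w² > 0`. An affine map with positive intercept sends
`v < t² v` to values whose ratio is strictly between `1` and `t²`.
-/

open MeasureTheory ProbabilityTheory
open scoped NNReal

namespace ProbabilityTheory

variable {Ω : Type*} {mΩ : MeasurableSpace Ω} {μ : Measure Ω}

lemma IndepFun.variance_mul [IsProbabilityMeasure μ] {X Y : Ω → ℝ}
    (hX : MemLp X 2 μ) (hY : MemLp Y 2 μ) (hXY : X ⟂ᵢ[μ] Y) :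
    Var[X * Y; μ] = Var[X; μ] * (Var[Y; μ] + μ[Y] ^ 2) + μ[X] ^ 2 * Var[Y; μ] := by
  have hsq : (X ^ 2) ⟂ᵢ[μ] (Y ^ 2) := by
    exact hXY.comp (φ := fun x : ℝ ↦ x ^ 2) (ψ := fun y : ℝ ↦ y ^ 2) (by fun_prop) (by fun_prop)
  have hXY2 : MemLp (X * Y) 2 μ := by
    refine (memLp_two_iff_integrable_sq
      (hX.aestronglyMeasurable.mul hY.aestronglyMeasurable)).2 ?_
    have h := hsq.integrable_mul hX.integrable_sq hY.integrable_sq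
    rwa [← mul_pow] at h
  rw [variance_eq_sub hXY2, variance_eq_sub hX, variance_eq_sub hY, mul_pow,
    hsq.integral_mul_eq_mul_integral (hX.aestronglyMeasurable.pow 2)
      (hY.aestronglyMeasurable.pow 2),
    hXY.integral_mul_eq_mul_integral hX.aestronglyMeasurable hY.aestronglyMeasurable]
  ring

namespace HasLaw

variable {X : Ω → ℝ} {m : ℝ} {v : ℝ≥0}

lemma memLp_two_of_gaussianReal (hX : HasLaw X (gaussianReal m v) μ) : MemLp X 2 μ := by
  have h := memLp_id_gaussianReal (μ := m) (v := v) 2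
  rw [← hX.map_eq] at h
  exact h.comp_of_map hX.aemeasurable

lemma integral_eq_of_gaussianReal (hX : HasLaw X (gaussianReal m v) μ) : μ[X] = m := by
  rw [hX.integral_eq, integral_id_gaussianReal]

lemma variance_eq_of_gaussianReal (hX : HasLaw X (gaussianReal m v) μ) : Var[X; μ] = v := by
  rw [hX.variance_eq, variance_id_gaussianReal]

end HasLaw

lemma variance_mul_of_gaussianReal [IsProbabilityMeasure μ] {X W : Ω → ℝ}
    {mx mw : ℝ} {vx vw : ℝ≥0}
    (hX : HasLaw X (gaussianReal mx vx) μ) (hW : HasLaw W (gaussianReal mw vw) μ)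
    (hXW : X ⟂ᵢ[μ] W) :
    Var[X * W; μ] = vx * (vw + mw ^ 2) + mx ^ 2 * vw := by
  rw [hXW.variance_mul hX.memLp_two_of_gaussianReal hW.memLp_two_of_gaussianReal,
    hX.variance_eq_of_gaussianReal, hW.variance_eq_of_gaussianReal,
    hX.integral_eq_of_gaussianReal, hW.integral_eq_of_gaussianReal]

end ProbabilityTheory

lemma affine_lt_lt_mul_of_pos {α β a s : ℝ} (hα : 0 < α) (hβ : 0 < β) (ha : 0 < a)
    (hs : 1 < s) : a * α + β < s * a * α + β ∧ s * a * α + β < s * (a * α + β) := by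
  constructor <;> nlinarith [mul_pos (mul_pos hα ha) (sub_pos.2 hs), mul_pos hβ (sub_pos.2 hs)]

lemma one_lt_sqrt_div_sqrt_lt {A B t : ℝ} (hA : 0 < A) (ht : 0 < t) (hAB : A < B)
    (hBA : B < t ^ 2 * A) : 1 < √B / √A ∧ √B / √A < t := by
  have hsA : 0 < √A := Real.sqrt_pos.2 hA
  rw [one_lt_div hsA, div_lt_iff₀ hsA]
  refine ⟨Real.sqrt_lt_sqrt hA.le hAB, ?_⟩
  calc √B < √(t ^ 2 * A) := Real.sqrt_lt_sqrt (hA.trans hAB).le hBA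
    _ = t * √A := by rw [Real.sqrt_mul (sq_nonneg t), Real.sqrt_sq ht.le]

/-- Proposition 1: multiplying by an independent Gaussian weight `W ~ N(μ_w, σ_w²)`
strictly contracts the variance ratio between an outlier Gaussian input
`X₂ ~ N(μ_x, t²σ_x²)` and a normal Gaussian input `X₁ ~ N(μ_x, σ_x²)` (with
`σ_x, σ_w > 0`, `μ_x ≠ 0`, `t > 1`): `Var(X₁W) < Var(X₂W) < t²·Var(X₁W)`; in particular
the output standard-deviation ratio lies strictly between `1` and `t`. -/
theorem stmt0 {Ω : Type*} [MeasurableSpace Ω] (μ : Measure Ω) [IsProbabilityMeasure μ]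
    (X₁ X₂ W : Ω → ℝ) (μx σx μw σw t : ℝ)
    (hσx : 0 < σx) (hσw : 0 < σw) (hμx : μx ≠ 0) (ht : 1 < t)
    (hX₁meas : Measurable X₁) (hX₂meas : Measurable X₂) (hWmeas : Measurable W)
    (hX₁ : Measure.map X₁ μ = gaussianReal μx ⟨σx ^ 2, sq_nonneg σx⟩)
    (hX₂ : Measure.map X₂ μ = gaussianReal μx ⟨t ^ 2 * σx ^ 2,
      mul_nonneg (sq_nonneg t) (sq_nonneg σx)⟩)
    (hW : Measure.map W μ = gaussianReal μw ⟨σw ^ 2, sq_nonneg σw⟩)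
    (hindep₁ : IndepFun X₁ W μ) (hindep₂ : IndepFun X₂ W μ) :
    variance (X₁ * W) μ < variance (X₂ * W) μ ∧
    variance (X₂ * W) μ < t ^ 2 * variance (X₁ * W) μ ∧
    1 < Real.sqrt (variance (X₂ * W) μ) / Real.sqrt (variance (X₁ * W) μ) ∧
    Real.sqrt (variance (X₂ * W) μ) / Real.sqrt (variance (X₁ * W) μ) < t := by
  have hWlaw : HasLaw W _ μ := ⟨hWmeas.aemeasurable, hW⟩
  have hV₁ : Var[X₁ * W; μ] = σx ^ 2 * (σw ^ 2 + μw ^ 2) + μx ^ 2 * σw ^ 2 :=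
    variance_mul_of_gaussianReal ⟨hX₁meas.aemeasurable, hX₁⟩ hWlaw hindep₁
  have hV₂ : Var[X₂ * W; μ] = t ^ 2 * σx ^ 2 * (σw ^ 2 + μw ^ 2) + μx ^ 2 * σw ^ 2 :=
    variance_mul_of_gaussianReal ⟨hX₂meas.aemeasurable, hX₂⟩ hWlaw hindep₂
  have hV₁_pos : 0 < Var[X₁ * W; μ] := by rw [hV₁]; positivity
  obtain ⟨h₁₂, h₂₁⟩ : Var[X₁ * W; μ] < Var[X₂ * W; μ] ∧
      Var[X₂ * W; μ] < t ^ 2 * Var[X₁ * W; μ] := by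
    rw [hV₁, hV₂]
    exact affine_lt_lt_mul_of_pos (by positivity) (by positivity) (by positivity)
      (one_lt_pow₀ ht two_ne_zero)
  exact ⟨h₁₂, h₂₁, one_lt_sqrt_div_sqrt_lt hV₁_pos (by positivity) h₁₂ h₂₁⟩
end

section
/- Fix a bit-width b ≥ 1, a real exponent p ≥ 1, and σ > 0. Define the unsigned uniform quantizer Q_s and the one-sided Lᵖ quantization distortion D(σ, s) = ∫_{[0,∞)} |x − Q_s(x)|^p · f_σ(x) dx against the centered Gaussian density f_σ of N(0, σ²). Suppose h > 0 minimizes s ↦ D(σ, s) over all s > 0. Then for every t > 0, the value t·h minimizes s ↦ D(t·σ, s) over all s > 0. In particular, if h is the optimal quantization step for the Gaussian N(0, σ²), then k·h is the optimal quantization step for the Gaussian N(0, k²σ²) for any k > 0. -/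
/-! Rescaling the input, the step and the standard deviation by the same `t > 0` rescales the
quantization error by `t` and the density by `t⁻¹`; the substitution `x = t y` then shows
`D(tσ, ts) = tᵖ D(σ, s)`, so the map `s ↦ t s` carries minimizers of `D(σ, ·)` to minimizers
of `D(tσ, ·)`. -/

/-- The unsigned uniform `b`-bit quantizer with step size `s`:
`Q_s(x) = s · clamp(round(x/s), 0, 2^b − 1)`. -/
noncomputable def uquant (b : ℕ) (s x : ℝ) : ℝ :=
  s * ((min (max (round (x / s)) 0) (2 ^ b - 1) : ℤ) : ℝ)

/-- Density of the centered Gaussian `N(0, σ²)`. -/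
noncomputable def gaussDensity (σ x : ℝ) : ℝ :=
  (1 / (σ * Real.sqrt (2 * Real.pi))) * Real.exp (-x ^ 2 / (2 * σ ^ 2))

/-- One-sided `Lᵖ` quantization distortion of the `b`-bit quantizer with step `s`
against the centered Gaussian density of `N(0, σ²)`. -/
noncomputable def distortion (b : ℕ) (p σ s : ℝ) : ℝ :=
  ∫ x in Set.Ici (0 : ℝ), |x - uquant b s x| ^ p * gaussDensity σ x

open MeasureTheory Set

lemma uquant_mul_mul (b : ℕ) {t : ℝ} (ht : t ≠ 0) (s x : ℝ) :
    uquant b (t * s) (t * x) = t * uquant b s x := by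
  rw [uquant, uquant, mul_div_mul_left _ _ ht, mul_assoc]

-- For `σ = 0` both sides vanish, since `1 / 0 = 0` in the normalizing constant.
lemma gaussDensity_mul_mul {t : ℝ} (ht : t ≠ 0) (σ x : ℝ) :
    gaussDensity (t * σ) (t * x) = t⁻¹ * gaussDensity σ x := by
  rcases eq_or_ne σ 0 with rfl | hσ
  · simp [gaussDensity]
  have hexp : -(t * x) ^ 2 / (2 * (t * σ) ^ 2) = -x ^ 2 / (2 * σ ^ 2) := by
    field_simp
  rw [gaussDensity, gaussDensity, hexp]
  field_simp

lemma distortion_mul_mul (b : ℕ) (p : ℝ) {t : ℝ} (ht : 0 < t) (σ s : ℝ) :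
    distortion b p (t * σ) (t * s) = t ^ p * distortion b p σ s := by
  set F := fun x => |x - uquant b (t * s) x| ^ p * gaussDensity (t * σ) x
  have hF : ∀ x, F (t * x) = t ^ p * t⁻¹ * (|x - uquant b s x| ^ p * gaussDensity σ x) := by
    intro x
    simp only [F]
    rw [uquant_mul_mul b ht.ne', gaussDensity_mul_mul ht.ne', ← mul_sub, abs_mul,
      abs_of_pos ht, Real.mul_rpow ht.le (abs_nonneg _)]
    ring
  calc distortion b p (t * σ) (t * s) = ∫ x in Ioi 0, F x := integral_Ici_eq_integral_Ioi
    _ = t * ∫ x in Ioi 0, F (t * x) := by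
      rw [integral_comp_mul_left_Ioi F 0 ht, mul_zero, smul_eq_mul, mul_inv_cancel_left₀ ht.ne']
    _ = t ^ p * distortion b p σ s := by
      simp only [hF, integral_const_mul, distortion, integral_Ici_eq_integral_Ioi]
      field_simp

theorem stmt7_general (b : ℕ) (p σ : ℝ)
    (h : ℝ) (hopt : ∀ s : ℝ, 0 < s → distortion b p σ h ≤ distortion b p σ s) :
    ∀ t : ℝ, 0 < t → ∀ s : ℝ, 0 < s →
      distortion b p (t * σ) (t * h) ≤ distortion b p (t * σ) s := by
  intro t ht s hs
  calc distortion b p (t * σ) (t * h) = t ^ p * distortion b p σ h := distortion_mul_mul b p ht σ h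
    _ ≤ t ^ p * distortion b p σ (s / t) := by gcongr; exact hopt _ (div_pos hs ht)
    _ = distortion b p (t * σ) s := by
      rw [← distortion_mul_mul b p ht, mul_div_cancel₀ _ ht.ne']

/-- If `h > 0` minimizes the distortion `s ↦ D(σ, s)` over `s > 0`, then for every
`t > 0`, the step `t·h` minimizes `s ↦ D(t·σ, s)` over `s > 0`: the optimal
quantization step for a Gaussian scales linearly with its standard deviation. -/
theorem stmt7 (b : ℕ) (hb : 1 ≤ b) (p σ : ℝ) (hp : 1 ≤ p) (hσ : 0 < σ)
    (h : ℝ) (hh : 0 < h) (hopt : ∀ s : ℝ, 0 < s → distortion b p σ h ≤ distortion b p σ s) :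
    ∀ t : ℝ, 0 < t → ∀ s : ℝ, 0 < s →
      distortion b p (t * σ) (t * h) ≤ distortion b p (t * σ) s :=
  stmt7_general b p σ h hopt
end
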